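/- arXiv:math/0011220 — 2 statements merged into one kernel-verified Lean document; each statement's English description precedes it below -/
import Mathlib

section
/- For nonnegative integers L and M, the alternating sum over all integers j of (-1)^j q^{j(3j+1)/2} times B(L,M,j,j) equals the q-binomial coefficient [L+M choose M], where B(L,M,a,b) = [L+M+a-b choose L+a]_q [L+M-a+b choose L-a]_q. -/
open Polynomial

noncomputable def qb : ℕ → ℕ → Polynomial ℤ
  | _, 0 => 1
  | 0, _ + 1 => 0
  | n + 1, m + 1 => qb n m + X ^ (m + 1) * qb n (m + 1)

/-- The Gaussian binomial coefficient with integer arguments, zero unless `0 ≤ m ≤ n`. -/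
noncomputable def qbz (n m : ℤ) : Polynomial ℤ :=
  if 0 ≤ m ∧ m ≤ n then qb n.toNat m.toNat else 0

/-- `B(L,M,a,b) = [L+M+a-b; L+a]_q [L+M-a+b; L-a]_q`. -/
noncomputable def Bp (L M a b : ℤ) : Polynomial ℤ :=
  qbz (L + M + a - b) (L + a) * qbz (L + M - a + b) (L - a)



noncomputable def eps (j : ℤ) : Polynomial ℤ := (-1) ^ j.natAbs
noncomputable def ee (c j : ℤ) : ℤ := (3 * j ^ 2 + c * j) / 2
noncomputable def TT (c d n₁ n₂ x y : ℤ) (j : ℤ) : Polynomial ℤ :=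
  eps j * X ^ (ee c j + d).toNat * (qbz n₁ (x + j) * qbz n₂ (y + j))
noncomputable def FF (c d n₁ n₂ x y : ℤ) : Polynomial ℤ := ∑ᶠ j : ℤ, TT c d n₁ n₂ x y j

lemma qb_zero (n : ℕ) : qb n 0 = 1 := by cases n <;> rfl

lemma qb_zero_succ (m : ℕ) : qb 0 (m+1) = 0 := rfl

lemma qb_succ (n m : ℕ) : qb (n+1) (m+1) = qb n m + X ^ (m + 1) * qb n (m + 1) := rfl

lemma qb_eq_zero_of_lt : ∀ {n m : ℕ}, n < m → qb n m = 0 := by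
  intro n
  induction n with
  | zero => intro m h; obtain ⟨m', rfl⟩ := Nat.exists_eq_succ_of_ne_zero (by omega : m ≠ 0); rfl
  | succ n ih =>
    intro m h
    obtain ⟨m', rfl⟩ := Nat.exists_eq_succ_of_ne_zero (by omega : m ≠ 0)
    rw [qb_succ, ih (by omega), ih (by omega)]
    simp

lemma qb_self : ∀ n : ℕ, qb n n = 1 := by
  intro n
  induction n with
  | zero => rfl
  | succ n ih => rw [qb_succ, ih, qb_eq_zero_of_lt (by omega)]; simp

lemma qb_one : ∀ n : ℕ, qb (n+1) 1 = X ^ n + qb n 1 := by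
  intro n
  induction n with
  | zero => show qb 1 1 = X ^ 0 + qb 0 1; rw [qb_self]; simp [qb_zero_succ]
  | succ n ih =>
    have e1 : qb (n+1) 1 = 1 + X * qb n 1 := by
      have := qb_succ n 0
      rw [qb_zero] at this
      simpa using this
    have e2 : qb (n+2) 1 = 1 + X * qb (n+1) 1 := by
      have := qb_succ (n+1) 0
      rw [qb_zero] at this
      simpa using this
    rw [e2]
    conv_rhs => rw [e1]
    conv_lhs => rw [ih]
    ring

lemma qb_pascal₂ : ∀ n m : ℕ, m ≤ n → qb (n+1) (m+1) = X ^ (n - m) * qb n m + qb n (m+1) := by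
  intro n
  induction n with
  | zero => intro m hm; interval_cases m; simp [qb_succ, qb_zero, qb_zero_succ]
  | succ n ih =>
    intro m hm
    rcases m with _ | m'
    · rw [show n + 1 - 0 = n + 1 by omega, qb_zero]
      have := qb_one (n+1)
      simpa using this
    · rcases Nat.lt_or_ge m' n with h | h
      · -- m'+1 ≤ n
        obtain ⟨u, rfl⟩ : ∃ u, n = m' + 1 + u := ⟨n - m' - 1, by omega⟩
        conv_lhs => rw [qb_succ, ih m' (by omega), ih (m'+1) (by omega)]
        conv_rhs => rw [qb_succ (m'+1+u) m', qb_succ (m'+1+u) (m'+1)]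
        simp only [show m'+1+u - m' = u+1 from by omega,
          show m'+1+u - (m'+1) = u from by omega,
          show m'+1+u+1 - (m'+1) = u+1 from by omega]
        ring
      · rw [show m' = n from by omega]
        rw [qb_self, qb_self, qb_eq_zero_of_lt (by omega), show n+1-(n+1) = 0 by omega]
        simp

lemma qb_symm : ∀ n m : ℕ, m ≤ n → qb n m = qb n (n - m) := by
  intro n
  induction n with
  | zero => intro m hm; interval_cases m; rfl
  | succ n ih =>
    intro m hm
    rcases m with _ | m'
    · rw [qb_zero, show n + 1 - 0 = n + 1 by omega, qb_self]
    · rcases Nat.lt_or_ge m' n with h | h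
      · rw [qb_succ, ih m' (by omega), ih (m'+1) (by omega)]
        rw [show n + 1 - (m'+1) = (n - m' - 1) + 1 by omega]
        rw [qb_pascal₂ n (n - m' - 1) (by omega)]
        rw [show n - (n - m' - 1) = m' + 1 by omega, show n - m' - 1 = n - (m'+1) by omega]
        ring_nf
        rw [show 1 + (n - (1 + m')) = n - m' from by omega, show n - (1+m') = n - (m'+1) from by omega]
        ring
      · rw [show m' = n from by omega]
        rw [qb_self, show n+1-(n+1) = 0 by omega, qb_zero]
lemma qbA : ∀ m k : ℕ, (1 - X ^ (k+1)) * qb (m+1) (k+1) = (1 - X ^ (m+1)) * qb m k := by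
  intro m
  induction m with
  | zero =>
    intro k
    rcases k with _ | k'
    · rw [qb_self, qb_self]
    · rw [qb_eq_zero_of_lt (by omega), qb_eq_zero_of_lt (by omega)]; ring
  | succ m ih =>
    intro k
    rcases Nat.lt_or_ge m k with h | h
    · rcases Nat.lt_or_ge (m+1) k with h2 | h2
      · rw [qb_eq_zero_of_lt (by omega), qb_eq_zero_of_lt (by omega)]; ring
      · rw [show k = m+1 from by omega, qb_self, qb_self]
    · -- k ≤ m : main case
      have hB : (1 - X ^ (m+1-k)) * qb (m+1) k = (1 - X ^ (m+1)) * qb m k := by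
        have hA := ih (m - k)
        rw [show m - k + 1 = m + 1 - k from by omega] at hA
        rw [qb_symm (m+1) (m+1-k) (by omega), show (m+1) - (m+1-k) = k from by omega] at hA
        rw [qb_symm m (m-k) (by omega), show m - (m-k) = k from by omega] at hA
        exact hA
      calc (1 - X^(k+1)) * qb (m+1+1) (k+1)
          = (1-X^(k+1)) * qb (m+1) k + X^(k+1) * ((1-X^(k+1)) * qb (m+1) (k+1)) := by
            rw [qb_succ (m+1) k]; ring
        _ = (1-X^(k+1)) * qb (m+1) k + X^(k+1) * ((1-X^(m+1-k)) * qb (m+1) k) := by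
            rw [ih k, hB]
        _ = (1 - X^(k+1) + X^(k+1) - X^(k+1) * X^(m+1-k)) * qb (m+1) k := by ring
        _ = (1 - X^(m+1+1)) * qb (m+1) k := by
            rw [← pow_add, show k+1+(m+1-k) = m+1+1 from by omega]; ring

lemma qbB (m k : ℕ) (hk : k ≤ m) :
    (1 - X ^ (m+1-k)) * qb (m+1) k = (1 - X ^ (m+1)) * qb m k := by
  have hA := qbA m (m - k)
  rw [show m - k + 1 = m + 1 - k from by omega] at hA
  rw [qb_symm (m+1) (m+1-k) (by omega), show (m+1) - (m+1-k) = k from by omega] at hA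
  rw [qb_symm m (m-k) (by omega), show m - (m-k) = k from by omega] at hA
  exact hA

lemma qbC (m k : ℕ) (hk : k < m) :
    (1 - X ^ (k+1)) * qb m (k+1) = (1 - X ^ (m-k)) * qb m k := by
  obtain ⟨m', rfl⟩ := Nat.exists_eq_succ_of_ne_zero (by omega : m ≠ 0)
  rw [qbA m' k, show m'+1-k = m'+1-k from rfl]
  rw [← qbB m' k (by omega), show m'+1-k = m'+1-k from rfl]
lemma qbz_natCast (n k : ℕ) : qbz n k = qb n k := by
  unfold qbz
  split_ifs with h
  · simp
  · push_neg at h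
    have : (n:ℤ) < k := h (by positivity)
    rw [qb_eq_zero_of_lt (by exact_mod_cast this)]

lemma qbz_neg {n k : ℤ} (h : k < 0) : qbz n k = 0 := by
  unfold qbz; rw [if_neg (by omega)]

lemma qbz_gt {n k : ℤ} (h : n < k) : qbz n k = 0 := by
  unfold qbz; rw [if_neg (by omega)]

lemma qbz_zero (n : ℕ) : qbz (n:ℤ) 0 = 1 := by
  have := qbz_natCast n 0
  simpa [qb_zero] using this

lemma qbz_pascal₁ (n : ℕ) (k : ℤ) :
    qbz (↑(n+1)) k = qbz n (k-1) + X ^ k.toNat * qbz n k := by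
  rcases lt_or_ge k 0 with h | h
  · rw [qbz_neg h, qbz_neg (show k - 1 < 0 by omega), qbz_neg h]; simp
  · lift k to ℕ using h
    rcases k with _ | m
    · rw [show ((0:ℕ):ℤ) = (0:ℤ) from rfl, qbz_zero, qbz_zero,
        qbz_neg (show (0:ℤ) - 1 < 0 by omega)]
      simp
    · rw [show (((m+1:ℕ)):ℤ) - 1 = ((m:ℕ):ℤ) from by push_cast; ring]
      rw [qbz_natCast, qbz_natCast, qbz_natCast, Int.toNat_natCast, qb_succ]

lemma qbz_pascal₂ (n : ℕ) (k : ℤ) :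
    qbz (↑(n+1)) k = X ^ ((n:ℤ)+1-k).toNat * qbz n (k-1) + qbz n k := by
  rcases lt_or_ge k 0 with h | h
  · rw [qbz_neg h, qbz_neg (show k - 1 < 0 by omega), qbz_neg h]; simp
  · lift k to ℕ using h
    rcases k with _ | m
    · rw [show ((0:ℕ):ℤ) = (0:ℤ) from rfl, qbz_zero, qbz_zero,
        qbz_neg (show (0:ℤ) - 1 < 0 by omega)]
      simp
    · rcases Nat.lt_or_ge (n+1) (m+1) with h2 | h2
      · rw [qbz_gt (show ((n+1:ℕ):ℤ) < ((m+1:ℕ):ℤ) from by exact_mod_cast h2),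
            qbz_gt (show ((n:ℕ):ℤ) < ((m+1:ℕ):ℤ) from by push_cast; omega),
            qbz_gt (show ((n:ℕ):ℤ) < ((m+1:ℕ):ℤ) - 1 from by push_cast; omega)]
        simp
      · rw [show (((m+1:ℕ)):ℤ) - 1 = ((m:ℕ):ℤ) from by push_cast; ring]
        rw [qbz_natCast, qbz_natCast, qbz_natCast]
        rw [show ((n:ℤ)+1-((m+1:ℕ):ℤ)).toNat = n - m from by push_cast; omega]
        exact qb_pascal₂ n m (by omega)

lemma qbz_symm (n : ℕ) (k : ℤ) : qbz n k = qbz n ((n:ℤ) - k) := by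
  rcases lt_or_ge k 0 with h | h
  · rw [qbz_neg h, qbz_gt (by omega)]
  · rcases le_or_gt k n with h2 | h2
    · lift k to ℕ using h
      have hkn : k ≤ n := by exact_mod_cast h2
      rw [show (n:ℤ) - (k:ℤ) = ((n - k : ℕ):ℤ) from by omega]
      rw [qbz_natCast, qbz_natCast]
      exact qb_symm n k hkn
    · rw [qbz_gt h2, qbz_neg (by omega)]
-- sign
lemma eps_neg (j : ℤ) : eps (-j) = eps j := by unfold eps; rw [Int.natAbs_neg]

lemma eps_even {j : ℤ} (h : Even j) : eps j = 1 := by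
  unfold eps; exact Even.neg_one_pow (Int.natAbs_even.mpr h)

lemma eps_odd {j : ℤ} (h : Odd j) : eps j = -1 := by
  unfold eps; exact Odd.neg_one_pow (Int.natAbs_odd.mpr h)

lemma eps_add_one (j : ℤ) : eps (j + 1) = -eps j := by
  rcases Int.even_or_odd j with h | h
  · rw [eps_even h, eps_odd (h.add_one)]
  · rw [eps_odd h, eps_even (by rcases h with ⟨m, rfl⟩; exact ⟨m+1, by ring⟩)]
    simp

lemma eps_sub_one (j : ℤ) : eps (j - 1) = -eps j := by
  have := eps_add_one (j - 1)
  simp at this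
  rw [this]; ring

lemma eps_neg_one_sub (j : ℤ) : eps (-1 - j) = -eps j := by
  rw [show (-1 - j : ℤ) = -(j+1) by ring, eps_neg, eps_add_one]

-- exponent
lemma ee_two (c j : ℤ) (hc : Odd c) : 2 * ee c j = 3 * j ^ 2 + c * j := by
  apply Int.mul_ediv_cancel'
  obtain ⟨t, rfl⟩ := hc
  rcases Int.even_or_odd j with ⟨m, rfl⟩ | ⟨m, rfl⟩
  · exact ⟨6 * m^2 + (2*t+1) * m, by ring⟩
  · exact ⟨6*m^2 + 2*t*m + 7*m + t + 2, by ring⟩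

lemma ee_cancel {x y : ℤ} (h : 2 * x = 2 * y) : x = y := by omega

lemma ee1_nonneg (j : ℤ) : 0 ≤ ee 1 j := by
  have h := ee_two 1 j ⟨0, by ring⟩
  have : 0 ≤ 3 * j ^ 2 + 1 * j := by nlinarith [sq_nonneg j, sq_nonneg (j+1), sq_nonneg (3*j+1)]
  omega

lemma ee3_nonneg (j : ℤ) : 0 ≤ ee 3 j := by
  have h := ee_two 3 j ⟨1, by ring⟩
  have : 0 ≤ 3 * j ^ 2 + 3 * j := by nlinarith [sq_nonneg j, sq_nonneg (j+1)]
  omega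

lemma eeneg1_nonneg (j : ℤ) : 0 ≤ ee (-1) j := by
  have h := ee_two (-1) j ⟨-1, by ring⟩
  have : 0 ≤ 3 * j ^ 2 + (-1) * j := by nlinarith [sq_nonneg j, sq_nonneg (j-1), sq_nonneg (3*j-1)]
  omega

lemma ee5_lb (j : ℤ) : -1 ≤ ee 5 j := by
  have h := ee_two 5 j ⟨2, by ring⟩
  have : -2 ≤ 3 * j ^ 2 + 5 * j := by nlinarith [sq_nonneg (j+1), sq_nonneg (3*j+2)]
  omega

lemma ee_add_two (c j : ℤ) (hc : Odd c) : ee (c+2) j = ee c j + j := by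
  apply ee_cancel
  have h1 := ee_two c j hc
  have h2 := ee_two (c+2) j (by obtain ⟨t, rfl⟩ := hc; exact ⟨t+1, by ring⟩)
  linarith

lemma ee_sub_two (c j : ℤ) (hc : Odd c) : ee (c-2) j = ee c j - j := by
  apply ee_cancel
  have h1 := ee_two c j hc
  have h2 := ee_two (c-2) j (by obtain ⟨t, rfl⟩ := hc; exact ⟨t-1, by ring⟩)
  linarith

lemma ee_reflect (c j : ℤ) (hc : Odd c) : ee c (-j) = ee (-c) j := by
  apply ee_cancel
  have h1 := ee_two c (-j) hc
  have h2 := ee_two (-c) j (by obtain ⟨t, rfl⟩ := hc; exact ⟨-t-1, by ring⟩)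
  rw [h1, h2]; ring

lemma ee3_invol (j : ℤ) : ee 3 (-1-j) = ee 3 j := by
  apply ee_cancel
  rw [ee_two 3 _ ⟨1, by ring⟩, ee_two 3 _ ⟨1, by ring⟩]; ring

lemma ee5_shift (j : ℤ) : ee 5 (j-1) = ee (-1) j - 1 := by
  apply ee_cancel
  rw [ee_two 5 _ ⟨2, by ring⟩]
  have := ee_two (-1) j ⟨-1, by ring⟩
  rw [show 2*(ee (-1) j - 1) = 2 * ee (-1) j - 2 by ring, this]; ring

-- summand and sum
lemma TT_fin (c d n₁ n₂ x y : ℤ) : (Function.support (TT c d n₁ n₂ x y)).Finite := by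
  apply Set.Finite.subset (Set.finite_Icc (-x) (n₁ - x))
  intro j hj
  simp only [Function.mem_support] at hj
  simp only [Set.mem_Icc]
  by_contra hcon
  push_neg at hcon
  have : qbz n₁ (x + j) = 0 := by
    rcases lt_or_ge j (-x) with h | h
    · exact qbz_neg (by omega)
    · exact qbz_gt (by have := hcon h; omega)
  apply hj
  unfold TT
  rw [this]
  ring

lemma FF_swap (c d n₁ n₂ x y : ℤ) : FF c d n₁ n₂ x y = FF c d n₂ n₁ y x := by
  unfold FF; apply finsum_congr; intro j; unfold TT; ring

lemma FF_split₁ (c d : ℤ) (hc : Odd c) (hd : ∀ j : ℤ, 0 ≤ ee c j + d) (n₁ : ℕ) (n₂ x y : ℤ) :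
    FF c d (↑(n₁+1)) n₂ x y = FF c d ↑n₁ n₂ (x-1) y + FF (c+2) (d+x) ↑n₁ n₂ x y := by
  unfold FF
  rw [← finsum_add_distrib (TT_fin _ _ _ _ _ _) (TT_fin _ _ _ _ _ _)]
  apply finsum_congr; intro j
  unfold TT
  rw [qbz_pascal₁ n₁ (x+j), show x - 1 + j = x + j - 1 by ring]
  rcases lt_or_ge (x + j) 0 with h | h
  · rw [qbz_neg h]; ring
  · have hexp : (ee c j + d).toNat + (x + j).toNat = (ee (c+2) j + (d + x)).toNat := by
      have h1 := ee_add_two c j hc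
      have h2 := hd j
      omega
    rw [← hexp, pow_add]
    ring

lemma FF_split₂ (c d : ℤ) (hc : Odd c) (hd : ∀ j : ℤ, 0 ≤ ee c j + d) (n₁ : ℕ) (n₂ x y : ℤ) :
    FF c d (↑(n₁+1)) n₂ x y
      = FF (c-2) (d + (↑n₁+1) - x) ↑n₁ n₂ (x-1) y + FF c d ↑n₁ n₂ x y := by
  unfold FF
  rw [← finsum_add_distrib (TT_fin _ _ _ _ _ _) (TT_fin _ _ _ _ _ _)]
  apply finsum_congr; intro j
  unfold TT
  rw [qbz_pascal₂ n₁ (x+j), show x - 1 + j = x + j - 1 by ring]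
  rcases lt_or_ge (x + j - 1) 0 with h | h
  · rw [qbz_neg h]; ring
  · rcases lt_or_ge (↑n₁ : ℤ) (x + j - 1) with h2 | h2
    · rw [qbz_gt h2]; ring
    · have hexp : (ee c j + d).toNat + ((n₁:ℤ) + 1 - (x+j)).toNat
          = (ee (c-2) j + (d + (↑n₁+1) - x)).toNat := by
        have h1 := ee_sub_two c j hc
        have h2' := hd j
        omega
      rw [← hexp, pow_add]
      ring

lemma FF_reflect (c d : ℤ) (hc : Odd c) (n₁ n₂ : ℕ) (x y : ℤ) :
    FF c d ↑n₁ ↑n₂ x y = FF (-c) d ↑n₁ ↑n₂ ((n₁:ℤ)-x) ((n₂:ℤ)-y) := by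
  unfold FF
  rw [← finsum_comp_equiv (Equiv.neg ℤ) (f := TT c d ↑n₁ ↑n₂ x y)]
  apply finsum_congr; intro j
  show TT c d ↑n₁ ↑n₂ x y (-j) = TT (-c) d ↑n₁ ↑n₂ ((n₁:ℤ)-x) ((n₂:ℤ)-y) j
  unfold TT
  rw [eps_neg, ee_reflect c j hc]
  rw [show x + -j = x - j by ring, qbz_symm n₁ (x - j), show (n₁:ℤ) - (x - j) = (n₁:ℤ) - x + j by ring]
  rw [show y + -j = y - j by ring, qbz_symm n₂ (y - j), show (n₂:ℤ) - (y - j) = (n₂:ℤ) - y + j by ring]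

lemma FF_null (m : ℕ) (d x y : ℤ) (h : x + y = (m:ℤ) + 1) : FF 3 d ↑m ↑m x y = 0 := by
  have key : ∀ j : ℤ, TT 3 d ↑m ↑m x y (-1-j) = -TT 3 d ↑m ↑m x y j := by
    intro j
    unfold TT
    rw [eps_neg_one_sub, ee3_invol]
    rw [show x + (-1-j) = x - 1 - j by ring, qbz_symm m (x-1-j),
        show (m:ℤ) - (x-1-j) = y + j by omega]
    rw [show y + (-1-j) = y - 1 - j by ring, qbz_symm m (y-1-j),
        show (m:ℤ) - (y-1-j) = x + j by omega]
    ring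
  have e1 : FF 3 d ↑m ↑m x y = ∑ᶠ j : ℤ, TT 3 d ↑m ↑m x y (-1-j) := by
    unfold FF
    rw [← finsum_comp_equiv (Function.Involutive.toPerm (fun j : ℤ => -1-j)
      (fun j => by ring)) (f := TT 3 d ↑m ↑m x y)]
    rfl
  have e2 : FF 3 d ↑m ↑m x y = -FF 3 d ↑m ↑m x y := by
    nth_rewrite 1 [e1]
    rw [finsum_congr key, finsum_neg_distrib]
    rfl
  exact CharZero.eq_neg_self_iff.mp e2

lemma FF_shift5 (d n₁ n₂ x y : ℤ) (hd : 1 ≤ d) :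
    FF 5 d n₁ n₂ x y = -FF (-1) (d-1) n₁ n₂ (x-1) (y-1) := by
  have key : ∀ j : ℤ, TT 5 d n₁ n₂ x y (j-1) = -TT (-1) (d-1) n₁ n₂ (x-1) (y-1) j := by
    intro j
    unfold TT
    rw [eps_sub_one, show (ee 5 (j-1) + d) = (ee (-1) j + (d-1)) by have := ee5_shift j; omega]
    rw [show x + (j-1) = x - 1 + j by ring, show y + (j-1) = y - 1 + j by ring]
    ring
  have e1 : FF 5 d n₁ n₂ x y = ∑ᶠ j : ℤ, TT 5 d n₁ n₂ x y (j-1) := by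
    unfold FF
    rw [← finsum_comp_equiv (Equiv.subRight (1:ℤ)) (f := TT 5 d n₁ n₂ x y)]
    rfl
  rw [e1, finsum_congr key, finsum_neg_distrib]
  rfl

lemma FF_const (c d : ℤ) (hc : ∀ j : ℤ, 0 ≤ ee c j) (hd : 0 ≤ d) (n₁ n₂ x y : ℤ) :
    FF c d n₁ n₂ x y = X ^ d.toNat * FF c 0 n₁ n₂ x y := by
  unfold FF
  rw [mul_finsum]
  apply finsum_congr; intro j
  unfold TT
  rw [show (ee c j + d).toNat = d.toNat + (ee c j + 0).toNat from by have := hc j; omega, pow_add]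
  ring

lemma odd1 : Odd (1:ℤ) := ⟨0, by ring⟩
lemma odd3 : Odd (3:ℤ) := ⟨1, by ring⟩
lemma hd1 : ∀ j : ℤ, 0 ≤ ee 1 j + 0 := fun j => by simpa using ee1_nonneg j
lemma hd3 (d : ℤ) (hd : 0 ≤ d) : ∀ j : ℤ, 0 ≤ ee 3 j + d := fun j => by
  have := ee3_nonneg j; omega

lemma qbz_self (n : ℕ) : qbz (n:ℤ) (n:ℤ) = 1 := by
  rw [qbz_natCast, qb_self]

-- P-shape lemma: tops (s, s-1), indices (x'+1, y'), with s = x'+y'+1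
lemma Plem (x' y' : ℕ)
    (h : FF 1 0 ↑(x'+y') ↑(x'+y') ↑x' ↑y' = qbz ↑(x'+y') ↑x') :
    FF 1 0 ((x':ℤ)+(y':ℤ)+1) ((x':ℤ)+(y':ℤ)) ((x':ℤ)+1) (y':ℤ) = qbz ((x':ℤ)+(y':ℤ)) (x':ℤ) := by
  have e := FF_split₁ 1 0 odd1 hd1 (x'+y') ((x':ℤ)+(y':ℤ)) ((x':ℤ)+1) (y':ℤ)
  push_cast at e
  rw [show ((x':ℤ)+1-1) = (x':ℤ) by ring] at e
  rw [e]
  have hnull := FF_null (x'+y') (0+((x':ℤ)+1)) ((x':ℤ)+1) (y':ℤ) (by push_cast; ring)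
  push_cast at hnull
  rw [hnull]
  push_cast at h
  rw [h]
  ring

-- Y-evaluation
lemma Yeval (x' y' : ℕ)
    (hSE : ∀ u a b : ℕ, a + b = u → u ≤ x' + y' → FF 1 0 ↑u ↑u ↑a ↑b = qbz ↑u ↑a) :
    FF 1 0 ((x':ℤ)+(y':ℤ)+1) ((x':ℤ)+(y':ℤ)+1) ((x':ℤ)+1) ((y':ℤ)+1)
      = (1 - X^(y'+1)) * qbz ((x':ℤ)+(y':ℤ)+1) (x':ℤ) := by
  have hSEt : FF 1 0 ↑(x'+y') ↑(x'+y') ↑x' ↑y' = qbz ↑(x'+y') ↑x' :=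
    hSE (x'+y') x' y' rfl le_rfl
  have hSEt' : FF 1 0 ↑(y'+x') ↑(y'+x') ↑y' ↑x' = qbz ↑(y'+x') ↑y' :=
    hSE (y'+x') y' x' rfl (by omega)
  -- step 1: split second factor (swap, split₁, swap back)
  rw [FF_swap]
  have e1 := FF_split₁ 1 0 odd1 hd1 (x'+y') ((x':ℤ)+(y':ℤ)+1) ((y':ℤ)+1) ((x':ℤ)+1)
  push_cast at e1
  rw [e1, FF_swap 1 0, FF_swap 3 (0+((y':ℤ)+1))]
  -- piece 1 : P-shape
  have hp : FF 1 0 ((x':ℤ)+(y':ℤ)+1) ((x':ℤ)+(y':ℤ)) ((x':ℤ)+1) ((y':ℤ)+1-1)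
      = qbz ((x':ℤ)+(y':ℤ)) (x':ℤ) := by
    rw [show ((y':ℤ)+1-1) = (y':ℤ) by ring]
    exact Plem x' y' hSEt
  rw [hp]
  -- piece 2
  have e2 := FF_split₁ 3 ((y':ℤ)+1) odd3 (hd3 _ (by positivity)) (x'+y')
      ((x':ℤ)+(y':ℤ)) ((x':ℤ)+1) ((y':ℤ)+1)
  push_cast at e2
  rw [show (0+((y':ℤ)+1)) = ((y':ℤ)+1) by ring, e2]
  have hnull := FF_null (x'+y') ((y':ℤ)+1) ((x':ℤ)+1-1) ((y':ℤ)+1) (by push_cast; ring)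
  push_cast at hnull
  rw [hnull]
  have e3 := FF_shift5 ((y':ℤ)+1+((x':ℤ)+1)) ((x':ℤ)+(y':ℤ)) ((x':ℤ)+(y':ℤ))
      ((x':ℤ)+1) ((y':ℤ)+1) (by omega)
  rw [e3]
  have e4 := FF_reflect (-1) ((y':ℤ)+1+((x':ℤ)+1)-1) ⟨-1, by ring⟩ (x'+y') (x'+y')
      ((x':ℤ)+1-1) ((y':ℤ)+1-1)
  push_cast at e4
  rw [show ((x':ℤ)+1-1) = (x':ℤ) by ring, show ((y':ℤ)+1-1) = (y':ℤ) by ring] at e4 ⊢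
  rw [e4]
  rw [show ((x':ℤ)+(y':ℤ)-(x':ℤ)) = (y':ℤ) by ring,
      show ((x':ℤ)+(y':ℤ)-(y':ℤ)) = (x':ℤ) by ring]
  have e5 := FF_const 1 ((y':ℤ)+1+((x':ℤ)+1)-1) ee1_nonneg (by omega)
      ((x':ℤ)+(y':ℤ)) ((x':ℤ)+(y':ℤ)) (y':ℤ) (x':ℤ)
  rw [e5]
  push_cast at hSEt'
  rw [show ((y':ℤ)+(x':ℤ)) = ((x':ℤ)+(y':ℤ)) by ring] at hSEt'
  rw [hSEt']
  -- now: qbz (x'+y') x' + -(X ^ (..).toNat * qbz (x'+y') y') = (1 - X^(y'+1)) * qbz (x'+y'+1) x'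
  have hsymm : qbz ((x':ℤ)+(y':ℤ)) (y':ℤ) = qbz ((x':ℤ)+(y':ℤ)) (x':ℤ) := by
    have := qbz_symm (x'+y') (y':ℤ)
    push_cast at this
    rw [this, show ((x':ℤ)+(y':ℤ)-(y':ℤ)) = (x':ℤ) by ring]
  rw [hsymm]
  have htn : (((y':ℤ)+1+((x':ℤ)+1)-1).toNat) = x'+y'+1 := by omega
  rw [htn]
  -- balance
  have hb := qbB (x'+y') x' (by omega)
  rw [show x'+y'+1-x' = y'+1 from by omega] at hb
  have c1 : qbz ((x':ℤ)+(y':ℤ)) (x':ℤ) = qb (x'+y') x' := by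
    have := qbz_natCast (x'+y') x'; push_cast at this; rw [this]
  have c2 : qbz ((x':ℤ)+(y':ℤ)+1) (x':ℤ) = qb (x'+y'+1) x' := by
    have := qbz_natCast (x'+y'+1) x'; push_cast at this; rw [this]
  rw [c1, c2]
  linear_combination -hb

lemma Seval : ∀ s a b : ℕ, a + b = s → FF 1 0 ↑s ↑s ↑a ↑b = qbz ↑s ↑a := by
  intro s
  induction s using Nat.strong_induction_on with
  | _ s IH =>
  intro a b hab
  rcases b with _ | b'
  · -- b = 0, so a = s
    have ha : a = s := by omega
    subst ha
    push_cast
    unfold FF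
    rw [finsum_eq_single _ 0 ?_]
    · unfold TT
      rw [show ee 1 0 = 0 from by unfold ee; norm_num]
      rw [show ((a:ℤ) + 0) = (a:ℤ) by ring, show ((0:ℤ) + 0) = (0:ℤ) by ring,
        qbz_self, qbz_zero]
      simp [eps]
    · intro j hj
      unfold TT
      rcases lt_or_gt_of_ne hj with h | h
      · rw [qbz_neg (show (0:ℤ) + j < 0 by omega)]; ring
      · rw [qbz_gt (show (a:ℤ) < (a:ℤ) + j by omega)]; ring
  · rcases a with _ | a'
    · -- a = 0, so b = s
      have hb : b' + 1 = s := by omega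
      subst hb
      push_cast
      unfold FF
      rw [finsum_eq_single _ 0 ?_]
      · unfold TT
        rw [show ee 1 0 = 0 from by unfold ee; norm_num]
        rw [show ((0:ℤ) + 0) = (0:ℤ) by ring, show ((b':ℤ) + 1 + 0) = ((b':ℤ)+1) by ring]
        rw [show ((b':ℤ)+1) = (((b'+1:ℕ)):ℤ) from by push_cast; ring]
        rw [qbz_self, qbz_zero]
        simp [eps]
      · intro j hj
        unfold TT
        rcases lt_or_gt_of_ne hj with h | h
        · rw [qbz_neg (show (0:ℤ) + j < 0 by omega)]; ring
        · rw [qbz_gt (show ((b':ℤ)+1) < (b':ℤ) + 1 + j by omega)]; ring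
    · -- main case
      push_cast
      rw [show (s:ℤ) = (a':ℤ)+(b':ℤ)+2 from by omega]
      rw [FF_swap]
      have e1 := FF_split₁ 1 0 odd1 hd1 (a'+b'+1) ((a':ℤ)+(b':ℤ)+2) ((b':ℤ)+1) ((a':ℤ)+1)
      push_cast at e1
      rw [show ((a':ℤ)+(b':ℤ)+1+1) = ((a':ℤ)+(b':ℤ)+2) from by ring] at e1
      rw [e1, FF_swap 1 0, FF_swap 3 (0+((b':ℤ)+1))]
      rw [show ((0:ℤ)+((b':ℤ)+1)) = ((b':ℤ)+1) from by ring]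
      -- piece 2 : Q-step (split₂ on first factor)
      have e2 := FF_split₂ 3 ((b':ℤ)+1) odd3 (fun j => by have := ee3_nonneg j; omega)
        (a'+b'+1) ((a':ℤ)+(b':ℤ)+1) ((a':ℤ)+1) ((b':ℤ)+1)
      push_cast at e2
      rw [show ((a':ℤ)+(b':ℤ)+1+1) = ((a':ℤ)+(b':ℤ)+2) from by ring] at e2
      rw [e2]
      have hn2 := FF_null (a'+b'+1) ((b':ℤ)+1) ((a':ℤ)+1) ((b':ℤ)+1) (by push_cast; ring)
      push_cast at hn2
      rw [hn2]
      rw [show ((b':ℤ)+1+((a':ℤ)+(b':ℤ)+2)-((a':ℤ)+1)) = (2*(b':ℤ)+2) from by ring]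
      rw [show ((a':ℤ)+1-1) = (a':ℤ) from by ring]
      have e2c := FF_const 1 (2*(b':ℤ)+2) ee1_nonneg (by omega)
        ((a':ℤ)+(b':ℤ)+1) ((a':ℤ)+(b':ℤ)+1) ((a':ℤ)) ((b':ℤ)+1)
      rw [e2c]
      have ih1 : FF 1 0 ((a':ℤ)+(b':ℤ)+1) ((a':ℤ)+(b':ℤ)+1) (a':ℤ) ((b':ℤ)+1)
          = qbz ((a':ℤ)+(b':ℤ)+1) (a':ℤ) := by
        have h := IH (a'+b'+1) (by omega) a' (b'+1) (by omega)
        push_cast at h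
        exact h
      rw [ih1]
      -- piece 1 : R-step (split₂ on first factor)
      rw [show ((b':ℤ)+1-1) = (b':ℤ) from by ring]
      have e3 := FF_split₂ 1 0 odd1 hd1 (a'+b'+1) ((a':ℤ)+(b':ℤ)+1) ((a':ℤ)+1) (b':ℤ)
      push_cast at e3
      rw [show ((a':ℤ)+(b':ℤ)+1+1) = ((a':ℤ)+(b':ℤ)+2) from by ring] at e3
      rw [e3]
      have ih2 : FF 1 0 ((a':ℤ)+(b':ℤ)+1) ((a':ℤ)+(b':ℤ)+1) ((a':ℤ)+1) (b':ℤ)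
          = qbz ((a':ℤ)+(b':ℤ)+1) ((a':ℤ)+1) := by
        have h := IH (a'+b'+1) (by omega) (a'+1) b' (by omega)
        push_cast at h
        exact h
      rw [ih2]
      rw [show ((0:ℤ)+((a':ℤ)+(b':ℤ)+2)-((a':ℤ)+1)) = ((b':ℤ)+1) from by ring]
      rw [show ((a':ℤ)+1-1) = (a':ℤ) from by ring]
      have e4 := FF_reflect (-1) ((b':ℤ)+1) ⟨-1, by ring⟩ (a'+b'+1) (a'+b'+1) (a':ℤ) (b':ℤ)
      push_cast at e4
      rw [e4]
      rw [show ((a':ℤ)+(b':ℤ)+1-(a':ℤ)) = ((b':ℤ)+1) from by ring,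
          show ((a':ℤ)+(b':ℤ)+1-(b':ℤ)) = ((a':ℤ)+1) from by ring]
      have e5 := FF_const 1 ((b':ℤ)+1) ee1_nonneg (by omega)
        ((a':ℤ)+(b':ℤ)+1) ((a':ℤ)+(b':ℤ)+1) ((b':ℤ)+1) ((a':ℤ)+1)
      rw [e5]
      have hy := Yeval b' a' (fun u aa bb h1 h2 => IH u (by omega) aa bb h1)
      rw [show ((b':ℤ)+(a':ℤ)+1) = ((a':ℤ)+(b':ℤ)+1) from by ring] at hy
      rw [hy]
      -- final assembly
      have hS : qbz ((a':ℤ)+(b':ℤ)+1) (b':ℤ) = qbz ((a':ℤ)+(b':ℤ)+1) ((a':ℤ)+1) := by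
        have h := qbz_symm (a'+b'+1) ((b':ℤ))
        push_cast at h
        rw [h, show ((a':ℤ)+(b':ℤ)+1-(b':ℤ)) = ((a':ℤ)+1) by ring]
      rw [hS]
      have hC : (1 - X^(a'+1)) * qbz ((a':ℤ)+(b':ℤ)+1) ((a':ℤ)+1)
          = (1 - X^(b'+1)) * qbz ((a':ℤ)+(b':ℤ)+1) (a':ℤ) := by
        have h := qbC (a'+b'+1) a' (by omega)
        rw [show a'+b'+1-a' = b'+1 from by omega] at h
        have n1 := qbz_natCast (a'+b'+1) (a'+1)
        have n2 := qbz_natCast (a'+b'+1) a'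
        push_cast at n1 n2
        rw [n1, n2, h]
      have hP : qbz ((a':ℤ)+(b':ℤ)+2) ((a':ℤ)+1)
          = X^(b'+1) * qbz ((a':ℤ)+(b':ℤ)+1) (a':ℤ) + qbz ((a':ℤ)+(b':ℤ)+1) ((a':ℤ)+1) := by
        have h := qbz_pascal₂ (a'+b'+1) ((a':ℤ)+1)
        push_cast at h
        rw [show ((a':ℤ)+(b':ℤ)+1+1) = ((a':ℤ)+(b':ℤ)+2) from by ring] at h
        rw [h]
        rw [show ((a':ℤ)+(b':ℤ)+2-((a':ℤ)+1)) = ((b':ℤ)+1) from by ring]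
        rw [show (((b':ℤ)+1).toNat) = b'+1 from by omega,
            show ((a':ℤ)+1-1) = (a':ℤ) from by ring]
      rw [hP]
      rw [show (((b':ℤ)+1).toNat) = b'+1 from by omega,
          show ((2*(b':ℤ)+2).toNat) = 2*b'+2 from by omega]
      linear_combination (X^(b'+1) : Polynomial ℤ) * hC

theorem stmt0 (L M : ℕ) :
    (∑ᶠ j : ℤ, (-1 : Polynomial ℤ) ^ j.natAbs *
        X ^ (j * (3 * j + 1) / 2).toNat * Bp L M j j) = qb (L + M) M := by
  have h0 : ∀ j : ℤ, (-1 : Polynomial ℤ) ^ j.natAbs *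
      X ^ (j * (3 * j + 1) / 2).toNat * Bp L M j j = TT 1 0 ((L:ℤ)+(M:ℤ)) ((L:ℤ)+(M:ℤ)) L M j := by
    intro j
    unfold TT Bp eps
    rw [show ((L:ℤ) + M + j - j) = ((L:ℤ) + M) by ring, show ((L:ℤ) + M - j + j) = ((L:ℤ) + M) by ring]
    rw [show (j*(3*j+1)/2) = ee 1 j + 0 from by unfold ee; rw [show j*(3*j+1) = 3*j^2+1*j by ring]; ring]
    have hs := qbz_symm (L+M) ((L:ℤ) - j)
    push_cast at hs
    rw [show ((L:ℤ)+(M:ℤ)-((L:ℤ)-j)) = ((M:ℤ)+j) from by ring] at hs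
    rw [hs]
  rw [finsum_congr h0]
  have hS := Seval (L+M) L M rfl
  push_cast at hS
  show FF 1 0 ((L:ℤ)+(M:ℤ)) ((L:ℤ)+(M:ℤ)) L M = qb (L + M) M
  rw [hS]
  have h1 := qbz_symm (L+M) ((L:ℤ))
  push_cast at h1
  rw [show ((L:ℤ)+(M:ℤ)-(L:ℤ)) = (M:ℤ) from by ring] at h1
  rw [h1]
  have h2 := qbz_natCast (L+M) M
  push_cast at h2
  rw [h2]
end

section
/- Let G(N,M;alpha,beta,K;q) = sum over integers j of (-1)^j q^{(K/2) j((alpha+beta)j + alpha - beta)} [M+N choose N-Kj]_q. Then G satisfies the recurrence G(N,M;alpha,beta,K) = G(N,M-1;alpha,beta,K) + q^M G(N-1,M;alpha+1,beta-1,K), valid whenever all exponents (K/2)j((alpha+beta)j+alpha-beta) are integers (e.g. alpha*K and beta*K integers). -/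
/-- The Gaussian binomial coefficient `[n; m]_x` with integer arguments, zero unless
`0 ≤ m ≤ n`, as a rational function in `x`. -/
noncomputable def qbFZ (x : RatFunc ℚ) (n m : ℤ) : RatFunc ℚ :=
  if 0 ≤ m ∧ m ≤ n then
    ∏ k ∈ Finset.range m.toNat, (1 - x ^ (n - m + (k : ℤ) + 1)) / (1 - x ^ ((k : ℤ) + 1))
  else 0

/-- `G(N,M;α,β,K) = ∑_j (-1)^j q^{(K/2)j((α+β)j+α-β)} [M+N; N-Kj]_q`.  The exponent of `q`
is the numerator of the rational number `(K/2)j((α+β)j+α-β)`; when that number is an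
integer (as in the hypothesis of the theorem below) this is exactly its value. -/
noncomputable def Gr (N M : ℤ) (α β : ℚ) (K : ℤ) : RatFunc ℚ :=
  ∑ᶠ j : ℤ, (-1 : RatFunc ℚ) ^ j.natAbs *
    (RatFunc.X : RatFunc ℚ) ^ (((K : ℚ) / 2 * j * ((α + β) * j + α - β)).num) *
    qbFZ RatFunc.X (M + N) (N - K * j)

lemma X_pow_ne_one (k : ℕ) (hk : 1 ≤ k) : (RatFunc.X : RatFunc ℚ) ^ k ≠ 1 := by
  intro h
  have h1 : (algebraMap (Polynomial ℚ) (RatFunc ℚ)) (Polynomial.X ^ k)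
      = (algebraMap (Polynomial ℚ) (RatFunc ℚ)) 1 := by
    rw [map_pow, RatFunc.algebraMap_X, map_one, h]
  have h2 : (Polynomial.X : Polynomial ℚ) ^ k = 1 := RatFunc.algebraMap_injective ℚ h1
  have := congrArg Polynomial.natDegree h2
  simp [Polynomial.natDegree_X_pow] at this
  omega

lemma one_sub_X_zpow_ne (m : ℤ) (hm : 1 ≤ m) : (1 : RatFunc ℚ) - RatFunc.X ^ m ≠ 0 := by
  have hx : (RatFunc.X : RatFunc ℚ) ^ m = RatFunc.X ^ m.toNat := by
    rw [← zpow_natCast, Int.toNat_of_nonneg (by omega)]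
  rw [hx, sub_ne_zero]
  exact fun h => X_pow_ne_one m.toNat (by omega) h.symm

/-- Peel the last factor: `[n;m] = [n-1;m-1] * (1-x^n)/(1-x^m)` for `1 ≤ m ≤ n`. -/
lemma qbFZ_last (x : RatFunc ℚ) (n m : ℤ) (h1 : 1 ≤ m) (h2 : m ≤ n) :
    qbFZ x n m = qbFZ x (n - 1) (m - 1) * ((1 - x ^ n) / (1 - x ^ m)) := by
  rw [qbFZ, qbFZ, if_pos ⟨by omega, h2⟩, if_pos ⟨by omega, by omega⟩]
  have hm : m.toNat = (m - 1).toNat + 1 := by omega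
  rw [hm, Finset.prod_range_succ]
  congr 1
  · apply Finset.prod_congr rfl
    intro k _
    have e1 : n - m + (k : ℤ) + 1 = n - 1 - (m - 1) + (k : ℤ) + 1 := by ring
    rw [e1]
  · have e1 : n - m + ((m - 1).toNat : ℤ) + 1 = n := by omega
    have e2 : ((m - 1).toNat : ℤ) + 1 = m := by omega
    rw [e1, e2]

/-- Peel the first factor: `[n-1;m] = [n-1;m-1] * (1-x^{n-m})/(1-x^m)` for `1 ≤ m ≤ n`. -/
lemma qbFZ_first (x : RatFunc ℚ) (n m : ℤ) (h1 : 1 ≤ m) (h2 : m ≤ n) :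
    qbFZ x (n - 1) m = qbFZ x (n - 1) (m - 1) * ((1 - x ^ (n - m)) / (1 - x ^ m)) := by
  rcases eq_or_lt_of_le h2 with he | hlt
  · rw [qbFZ, if_neg (by omega)]
    rw [show n - m = (0 : ℤ) by omega, zpow_zero, sub_self, zero_div, mul_zero]
  · rw [qbFZ, qbFZ, if_pos ⟨by omega, by omega⟩, if_pos ⟨by omega, by omega⟩]
    rw [Finset.prod_div_distrib, Finset.prod_div_distrib]
    have hm : m.toNat = (m - 1).toNat + 1 := by omega
    rw [hm, Finset.prod_range_succ', Finset.prod_range_succ, div_mul_div_comm]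
    congr 1
    · congr 1
      · apply Finset.prod_congr rfl
        intro k _
        have e1 : n - 1 - m + (((k + 1 : ℕ)) : ℤ) + 1 = n - 1 - (m - 1) + (k : ℤ) + 1 := by
          push_cast; ring
        rw [e1]
      · have e1 : n - 1 - m + ((0 : ℕ) : ℤ) + 1 = n - m := by push_cast; ring
        rw [e1]
    · congr 1
      have e2 : ((m - 1).toNat : ℤ) + 1 = m := by omega
      rw [e2]

/-- q-Pascal recurrence for `x = X`. -/
lemma qbFZ_pascal (n m : ℤ) (hn : 1 ≤ n) :
    qbFZ RatFunc.X n m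
      = qbFZ RatFunc.X (n - 1) m + RatFunc.X ^ (n - m) * qbFZ RatFunc.X (n - 1) (m - 1) := by
  rcases lt_or_ge m 0 with h | h
  · have hA : qbFZ RatFunc.X n m = 0 := by rw [qbFZ, if_neg (by omega)]
    have hB : qbFZ RatFunc.X (n - 1) m = 0 := by rw [qbFZ, if_neg (by omega)]
    have hC : qbFZ RatFunc.X (n - 1) (m - 1) = 0 := by rw [qbFZ, if_neg (by omega)]
    rw [hA, hB, hC]; simp
  rcases eq_or_lt_of_le h with he | h1
  · have hA : qbFZ RatFunc.X n m = 1 := by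
      rw [qbFZ, if_pos ⟨by omega, by omega⟩, ← he]; simp
    have hB : qbFZ RatFunc.X (n - 1) m = 1 := by
      rw [qbFZ, if_pos ⟨by omega, by omega⟩, ← he]; simp
    have hC : qbFZ RatFunc.X (n - 1) (m - 1) = 0 := by rw [qbFZ, if_neg (by omega)]
    rw [hA, hB, hC]; simp
  rcases le_or_gt m n with h2 | h2
  · have h1' : 1 ≤ m := h1
    rw [qbFZ_last RatFunc.X n m h1' h2, qbFZ_first RatFunc.X n m h1' h2]
    have hb : (1 : RatFunc ℚ) - RatFunc.X ^ m ≠ 0 := one_sub_X_zpow_ne m h1'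
    have hab : (RatFunc.X : RatFunc ℚ) ^ n = RatFunc.X ^ (n - m) * RatFunc.X ^ m := by
      rw [← zpow_add₀ (RatFunc.X_ne_zero (K := ℚ))]
      congr 1; ring
    rw [hab]
    set a := (RatFunc.X : RatFunc ℚ) ^ (n - m)
    set b := (RatFunc.X : RatFunc ℚ) ^ m
    set Q := qbFZ RatFunc.X (n - 1) (m - 1)
    field_simp
    ring
  · have hA : qbFZ RatFunc.X n m = 0 := by rw [qbFZ, if_neg (by omega)]
    have hB : qbFZ RatFunc.X (n - 1) m = 0 := by rw [qbFZ, if_neg (by omega)]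
    have hC : qbFZ RatFunc.X (n - 1) (m - 1) = 0 := by rw [qbFZ, if_neg (by omega)]
    rw [hA, hB, hC]; simp

/-- Finiteness of the supports appearing in `Gr`. -/
lemma support_fin {F : ℤ → RatFunc ℚ} (n' N' K : ℤ) (hK : 0 < K)
    (h : ∀ j, F j ≠ 0 → qbFZ RatFunc.X n' (N' - K * j) ≠ 0) :
    (Function.support F).Finite := by
  apply Set.Finite.subset (Set.finite_Icc (-(|N'| + |n'|)) (|N'| + |n'|))
  intro j hj
  have hqb := h j hj
  have hcond : 0 ≤ N' - K * j ∧ N' - K * j ≤ n' := by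
    by_contra hc
    exact hqb (by rw [qbFZ, if_neg hc])
  have ha1 : -|N'| ≤ N' := neg_abs_le N'
  have ha2 : N' ≤ |N'| := le_abs_self N'
  have ha3 : -|n'| ≤ n' := neg_abs_le n'
  have ha4 : n' ≤ |n'| := le_abs_self n'
  have hKj1 : K * j ≤ |N'| + |n'| := by omega
  have hKj2 : -(|N'| + |n'|) ≤ K * j := by omega
  simp only [Set.mem_Icc]
  rcases le_or_gt 0 j with hj0 | hj0
  · have hjK : j ≤ K * j := le_mul_of_one_le_left hj0 (by omega)
    omega
  · have hjK : K * j ≤ 1 * j := mul_le_mul_of_nonpos_right (by omega) (le_of_lt hj0)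
    rw [one_mul] at hjK
    omega

theorem stmt9 (N M : ℤ) (hN : 0 ≤ N) (hM : 1 ≤ M) (α β : ℚ) (K : ℤ) (hK : 0 < K)
    (hint : ∀ j : ℤ, ∃ e : ℤ, (K : ℚ) / 2 * j * ((α + β) * j + α - β) = (e : ℚ)) :
    Gr N M α β K
      = Gr N (M - 1) α β K + (RatFunc.X : RatFunc ℚ) ^ M * Gr (N - 1) M (α + 1) (β - 1) K := by
  have hX : (RatFunc.X : RatFunc ℚ) ≠ 0 := RatFunc.X_ne_zero
  have hE : ∀ j : ℤ,
      (((K : ℚ) / 2 * j * ((α + 1 + (β - 1)) * j + (α + 1) - (β - 1))).num)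
        = (((K : ℚ) / 2 * j * ((α + β) * j + α - β)).num) + K * j := by
    intro j
    obtain ⟨e, he⟩ := hint j
    have h1 : (K : ℚ) / 2 * j * ((α + 1 + (β - 1)) * j + (α + 1) - (β - 1))
        = (K : ℚ) / 2 * j * ((α + β) * j + α - β) + (K : ℚ) * j := by ring
    have h2 : ((e : ℚ) + (K : ℚ) * j) = ((e + K * j : ℤ) : ℚ) := by push_cast; ring
    rw [h1, he, h2, Rat.num_intCast, Rat.num_intCast]
  have hfin1 : (Function.support fun j : ℤ => (-1 : RatFunc ℚ) ^ j.natAbs *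
      (RatFunc.X : RatFunc ℚ) ^ (((K : ℚ) / 2 * j * ((α + β) * j + α - β)).num) *
      qbFZ RatFunc.X (M - 1 + N) (N - K * j)).Finite :=
    support_fin (M - 1 + N) N K hK (fun j hj hq => hj (by rw [hq, mul_zero]))
  have hfin2 : (Function.support fun j : ℤ => (-1 : RatFunc ℚ) ^ j.natAbs *
      (RatFunc.X : RatFunc ℚ) ^ (((K : ℚ) / 2 * j * ((α + 1 + (β - 1)) * j + (α + 1) - (β - 1))).num) *
      qbFZ RatFunc.X (M + (N - 1)) (N - 1 - K * j)).Finite :=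
    support_fin (M + (N - 1)) (N - 1) K hK (fun j hj hq => hj (by rw [hq, mul_zero]))
  have hfin3 : (Function.support fun j : ℤ => (RatFunc.X : RatFunc ℚ) ^ M *
      ((-1 : RatFunc ℚ) ^ j.natAbs *
      (RatFunc.X : RatFunc ℚ) ^ (((K : ℚ) / 2 * j * ((α + 1 + (β - 1)) * j + (α + 1) - (β - 1))).num) *
      qbFZ RatFunc.X (M + (N - 1)) (N - 1 - K * j))).Finite :=
    support_fin (M + (N - 1)) (N - 1) K hK (fun j hj hq => hj (by rw [hq, mul_zero, mul_zero]))
  simp only [Gr]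
  rw [mul_finsum _ _, ← finsum_add_distrib hfin1 hfin3]
  apply finsum_congr
  intro j
  have hpascal := qbFZ_pascal (M + N) (N - K * j) (by omega)
  rw [show M + N - (N - K * j) = M + K * j by ring] at hpascal
  rw [hpascal, mul_add]
  congr 1
  · rw [show M + N - 1 = M - 1 + N by ring]
  · rw [show M + N - 1 = M + (N - 1) by ring, show N - K * j - 1 = N - 1 - K * j by ring,
      hE j, zpow_add₀ hX _ (K * j), zpow_add₀ hX _ (K * j)]
    ring
end
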